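/- Let d ≥ 3 and let z_1, …, z_{d+1} ∈ ℤ^d be such that both z_1, …, z_d and z_2, …, z_{d+1} are bases of ℤ^d, z̲_2, …, z̲_d are linearly independent and z̲_3, …, z̲_{d+1} are linearly independent in ℝ^{d−1}, and |z̲_1| ≤ |z̲_2| ≤ |z̲_3| ≤ |z̲_4| with z̲_1 ≠ 0. Suppose also that α_3 ∈ 𝔖_2 and ⟨α_3, z_2⟩ · ⟨α_3, z_1⟩ > 0. Then for each α ∈ 𝔖_3 we have ⟨α, z_2⟩ · ⟨α_2, z_1⟩ > 0. -/

import Mathlib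

/-!
Let `v₀, …, v_{d-1}` be a basis of `ℤ^d` and `α ∈ π_d` orthogonal to `v₁, …, v_{d-1}`. Since
`α_d = 1`, adding `α_i` times row `i` (`i < d`) to the last row of `det (v₀ ⋯ v_{d-1}) = ±1` does
not change it and turns that row into `(⟪α, v₀⟫, 0, …, 0)`; expanding along it gives
`|⟪α_{k+1}, z_k⟫| · det Λ̲_{k+1,d-1} = 1`.
For `β ∈ 𝔖_{k+1}` and `|z̲_k| ≤ |z̲_{k+2}|` this yields
`|⟪β - α_{k+1}, z_k⟫| ≤ R_{k+1} |z̲_k| ≤ 1 / (2 det Λ̲_{k+1,d-1}) = |⟪α_{k+1}, z_k⟫| / 2`,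
so `⟪β, z_k⟫` has the sign of `⟪α_{k+1}, z_k⟫`. With `α ∈ 𝔖_3` (`k = 2`) and `α_3 ∈ 𝔖_2`
(`k = 1`), the signs of `⟪α, z_2⟫` and `⟪α_2, z_1⟫` are those of `⟪α_3, z_2⟫` and `⟪α_3, z_1⟫`.
-/

open scoped InnerProductSpace

noncomputable section

/-- `ℝ^n` with the Euclidean structure. -/
abbrev E (n : ℕ) : Type := EuclideanSpace ℝ (Fin n)

/-- The projection `x ↦ x̲` forgetting the last coordinate. -/
def pr (d : ℕ) (x : E d) : E (d - 1) :=
  WithLp.toLp 2 (fun i : Fin (d - 1) => x (Fin.castLE (Nat.sub_le d 1) i))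

/-- The canonical embedding of `ℤ^d` into `ℝ^d`. -/
def toE (d : ℕ) (z : Fin d → ℤ) : E d := WithLp.toLp 2 (fun i => (z i : ℝ))

/-- The `m`-dimensional volume of the parallelepiped spanned by `v 0, …, v (m-1)`
(square root of the Gram determinant). -/
def gramVol {n m : ℕ} (v : Fin m → E n) : ℝ :=
  Real.sqrt ((Matrix.of (fun i j : Fin m => ⟪v i, v j⟫_ℝ)).det)

/-- `z` is a best approximation vector for the linear form `L_α : x ↦ ⟪α, x⟫`. -/
def IsBestApprox (d : ℕ) (α : E d) (z : Fin d → ℤ) : Prop :=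
  pr d (toE d z) ≠ 0 ∧
  ∀ z' : Fin d → ℤ, pr d (toE d z') ≠ 0 →
    (‖pr d (toE d z')‖ ≤ ‖pr d (toE d z)‖ → |⟪α, toE d z⟫_ℝ| ≤ |⟪α, toE d z'⟫_ℝ|) ∧
    (‖pr d (toE d z')‖ < ‖pr d (toE d z)‖ → |⟪α, toE d z⟫_ℝ| < |⟪α, toE d z'⟫_ℝ|)

/-- `det Λ̲_{k,l}` for a sequence of integer vectors: the `l`-dimensional volume of the
parallelepiped spanned by `z̲_k, …, z̲_{k+l-1}`. -/
def detL (d : ℕ) (z : ℕ → Fin d → ℤ) (k l : ℕ) : ℝ :=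
  gramVol (fun i : Fin l => pr d (toE d (z (k + i.1))))

/-- `D_{k,l} = det Λ̲_{k,l} / |z̲_k|^l`. -/
def Dq (d : ℕ) (z : ℕ → Fin d → ℤ) (k l : ℕ) : ℝ :=
  detL d z k l / ‖pr d (toE d (z k))‖ ^ l

/-- `B_k = |z̲_{k+1}| / |z̲_k|`. -/
def Bq (d : ℕ) (z : ℕ → Fin d → ℤ) (k : ℕ) : ℝ :=
  ‖pr d (toE d (z (k + 1)))‖ / ‖pr d (toE d (z k))‖

/-- `R_k = 1 / (2 |z̲_{k+1}| det Λ̲_{k,d-1})`. -/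
def Rq (d : ℕ) (z : ℕ → Fin d → ℤ) (k : ℕ) : ℝ :=
  1 / (2 * ‖pr d (toE d (z (k + 1)))‖ * detL d z k (d - 1))

/-- `v 0, …, v (d-1)` form a basis of the lattice `ℤ^d`. -/
def IsZBasis (d : ℕ) (v : Fin d → Fin d → ℤ) : Prop :=
  IsUnit ((Matrix.of (fun i j : Fin d => v j i)).det)

lemma inner_eq_inner_pr_add {n : ℕ} (x y : E (n + 1)) :
    ⟪x, y⟫_ℝ = ⟪pr (n + 1) x, pr (n + 1) y⟫_ℝ + x (Fin.last n) * y (Fin.last n) := by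
  simp only [PiLp.inner_apply, RCLike.inner_apply, conj_trivial]
  exact (Fin.sum_univ_castSucc _).trans (by rw [mul_comm (y _)]; rfl)

lemma norm_pr_le {n : ℕ} (x : E (n + 1)) : ‖pr (n + 1) x‖ ≤ ‖x‖ := by
  have h := inner_eq_inner_pr_add x x
  rw [real_inner_self_eq_norm_sq, real_inner_self_eq_norm_sq] at h
  nlinarith [mul_self_nonneg (x (Fin.last n)), norm_nonneg (pr (n + 1) x), norm_nonneg x]

lemma abs_inner_le_norm_mul_norm_pr {n : ℕ} {x : E (n + 1)} (y : E (n + 1))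
    (hx : x (Fin.last n) = 0) : |⟪x, y⟫_ℝ| ≤ ‖x‖ * ‖pr (n + 1) y‖ := by
  rw [inner_eq_inner_pr_add, hx, zero_mul, add_zero]
  exact (abs_real_inner_le_norm _ _).trans (by gcongr; exact norm_pr_le x)

lemma gramVol_eq_abs_det {n : ℕ} (v : Fin n → E n) :
    gramVol v = |(Matrix.of fun i j => v i j).det| := by
  have h : Matrix.of (fun i j => ⟪v i, v j⟫_ℝ) =
      Matrix.of (fun i j => v i j) * (Matrix.of fun i j => v i j).transpose := by
    ext i j
    simp only [PiLp.inner_apply, RCLike.inner_apply, conj_trivial, Matrix.of_apply,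
      Matrix.mul_apply, Matrix.transpose_apply, mul_comm]
  rw [gramVol, h, Matrix.det_mul, Matrix.det_transpose, ← sq, Real.sqrt_sq_eq_abs]

lemma abs_det_eq_abs_inner_mul_gramVol_pr {n : ℕ} (v : Fin (n + 1) → E (n + 1))
    {α : E (n + 1)} (hα : α (Fin.last n) = 1) (hperp : ∀ j : Fin n, ⟪α, v j.succ⟫_ℝ = 0) :
    |(Matrix.of fun i j => v j i).det| =
      |⟪α, v 0⟫_ℝ| * gramVol (fun j : Fin n => pr (n + 1) (v j.succ)) := by
  set Z : Matrix (Fin (n + 1)) (Fin (n + 1)) ℝ := Matrix.of fun i j => v j i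
  set M := Z.updateRow (Fin.last n) fun j => ⟪α, v j⟫_ℝ
  have hZM : Z.det = M.det := by
    have hrow : ∑ i, α i • Z i = fun j => ⟪α, v j⟫_ℝ := by
      ext j
      simp [Z, PiLp.inner_apply, mul_comm]
    simpa [hα, hrow] using (Matrix.det_updateRow_sum Z (Fin.last n) α).symm
  have hminor : M.submatrix (Fin.last n).succAbove (0 : Fin (n + 1)).succAbove =
      (Matrix.of fun i j : Fin n => pr (n + 1) (v i.succ) j).transpose := by
    ext i j
    simp only [M, Z, pr, Matrix.submatrix_apply, Fin.succAbove_last, Fin.succAbove_zero,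
      Matrix.updateRow_ne (Fin.castSucc_lt_last i).ne, Matrix.of_apply, Matrix.transpose_apply]
    rfl
  rw [gramVol_eq_abs_det (n := n), hZM, Matrix.det_succ_row M (Fin.last n),
    Finset.sum_eq_single 0, hminor, Matrix.det_transpose]
  · simp [M, abs_mul]
  · intro j _ hj
    obtain ⟨j, rfl⟩ := Fin.exists_succ_eq.mpr hj
    simp [M, hperp]
  · simp

lemma IsZBasis.abs_det_toE {n : ℕ} {v : Fin n → Fin n → ℤ} (hv : IsZBasis n v) :
    |(Matrix.of fun i j => toE n (v j) i).det| = 1 := by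
  have hcast : (Matrix.of fun i j => toE n (v j) i) =
      (Int.castRingHom ℝ).mapMatrix (Matrix.of fun i j => v j i) := by
    ext i j
    simp [toE]
  rw [hcast, ← RingHom.map_det]
  rcases Int.isUnit_iff.mp hv with h | h <;> simp [h]

lemma abs_inner_mul_detL_eq_one {n : ℕ} {z : ℕ → Fin (n + 1) → ℤ} {k : ℕ}
    (hbasis : IsZBasis (n + 1) (fun j => z (j.1 + k))) {α : E (n + 1)}
    (hα : α (Fin.last n) = 1) (hperp : ∀ i : Fin n, ⟪α, toE (n + 1) (z (i.1 + (k + 1)))⟫_ℝ = 0) :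
    |⟪α, toE (n + 1) (z k)⟫_ℝ| * detL (n + 1) z (k + 1) n = 1 := by
  have h := abs_det_eq_abs_inner_mul_gramVol_pr (fun j => toE (n + 1) (z (j.1 + k))) hα
    (fun j => by simpa only [Fin.val_succ, add_right_comm, add_assoc] using hperp j)
  rw [hbasis.abs_det_toE] at h
  simpa only [detL, Fin.val_zero, zero_add, add_zero, Fin.val_succ, add_comm, add_left_comm]
    using h.symm

lemma Rq_mul_le {d : ℕ} (z : ℕ → Fin d → ℤ) (k : ℕ) {r : ℝ}
    (hr : r ≤ ‖pr d (toE d (z (k + 1)))‖) :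
    Rq d z k * r ≤ 1 / (2 * detL d z k (d - 1)) := by
  have hL : 0 ≤ detL d z k (d - 1) := Real.sqrt_nonneg _
  calc Rq d z k * r = r / ‖pr d (toE d (z (k + 1)))‖ * (1 / (2 * detL d z k (d - 1))) := by
        rw [Rq]; field_simp
    _ ≤ 1 / (2 * detL d z k (d - 1)) :=
        mul_le_of_le_one_left (by positivity) (div_le_one_of_le₀ hr (norm_nonneg _))

lemma abs_inner_sub_inner_le_half {n : ℕ} {z : ℕ → Fin (n + 1) → ℤ} {k : ℕ}
    (hbasis : IsZBasis (n + 1) (fun j => z (j.1 + k)))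
    (hnorm : ‖pr (n + 1) (toE (n + 1) (z k))‖ ≤ ‖pr (n + 1) (toE (n + 1) (z (k + 2)))‖)
    {αk : E (n + 1)} (hαk : αk (Fin.last n) = 1)
    (hperp : ∀ i : Fin n, ⟪αk, toE (n + 1) (z (i.1 + (k + 1)))⟫_ℝ = 0)
    {β : E (n + 1)} (hβ : β (Fin.last n) = 1) (hβS : ‖β - αk‖ ≤ Rq (n + 1) z (k + 1)) :
    |⟪β, toE (n + 1) (z k)⟫_ℝ - ⟪αk, toE (n + 1) (z k)⟫_ℝ| ≤
      |⟪αk, toE (n + 1) (z k)⟫_ℝ| / 2 := by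
  set x := toE (n + 1) (z k)
  have hL := abs_inner_mul_detL_eq_one hbasis hαk hperp
  have hlast : (β - αk) (Fin.last n) = 0 := by simp [hβ, hαk]
  calc |⟪β, x⟫_ℝ - ⟪αk, x⟫_ℝ| = |⟪β - αk, x⟫_ℝ| := by rw [inner_sub_left]
    _ ≤ ‖β - αk‖ * ‖pr (n + 1) x‖ := abs_inner_le_norm_mul_norm_pr x hlast
    _ ≤ Rq (n + 1) z (k + 1) * ‖pr (n + 1) x‖ := by gcongr
    _ ≤ 1 / (2 * detL (n + 1) z (k + 1) n) := Rq_mul_le z (k + 1) hnorm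
    _ = |⟪αk, x⟫_ℝ| / 2 := by
        have hL0 : detL (n + 1) z (k + 1) n ≠ 0 := right_ne_zero_of_mul_eq_one hL
        field_simp
        linarith

lemma mul_pos_of_abs_sub_le_half {x y : ℝ} (hx : x ≠ 0) (h : |y - x| ≤ |x| / 2) :
    0 < y * x := by
  have hxy : -(|x| / 2 * |x|) ≤ (y - x) * x :=
    calc -(|x| / 2 * |x|) ≤ -(|y - x| * |x|) := by gcongr
      _ = -|(y - x) * x| := by rw [abs_mul]
      _ ≤ (y - x) * x := neg_abs_le _
  nlinarith [abs_mul_abs_self x, pow_pos (abs_pos.mpr hx) 2]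

theorem stmt8 (d : ℕ) (hd : 3 ≤ d) (z : ℕ → Fin d → ℤ)
    (hbasis1 : IsZBasis d (fun j => z (j.1 + 1)))
    (hbasis2 : IsZBasis d (fun j => z (j.1 + 2)))
    (h12 : ‖pr d (toE d (z 1))‖ ≤ ‖pr d (toE d (z 2))‖)
    (h23 : ‖pr d (toE d (z 2))‖ ≤ ‖pr d (toE d (z 3))‖)
    (h34 : ‖pr d (toE d (z 3))‖ ≤ ‖pr d (toE d (z 4))‖)
    (α2 : E d) (hα2pi : α2 ⟨d - 1, by omega⟩ = 1)
    (hα2perp : ∀ i : Fin (d - 1), ⟪α2, toE d (z (i.1 + 2))⟫_ℝ = 0)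
    (α3 : E d) (hα3pi : α3 ⟨d - 1, by omega⟩ = 1)
    (hα3perp : ∀ i : Fin (d - 1), ⟪α3, toE d (z (i.1 + 3))⟫_ℝ = 0)
    (hα3S2 : ‖α3 - α2‖ ≤ Rq d z 2)
    (hsign : 0 < ⟪α3, toE d (z 2)⟫_ℝ * ⟪α3, toE d (z 1)⟫_ℝ)
    (α : E d) (hαpi : α ⟨d - 1, by omega⟩ = 1) (hαS3 : ‖α - α3‖ ≤ Rq d z 3) :
    0 < ⟪α, toE d (z 2)⟫_ℝ * ⟪α2, toE d (z 1)⟫_ℝ := by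
  obtain ⟨n, rfl⟩ : ∃ n, d = n + 1 := ⟨d - 1, by omega⟩
  have hα_near := abs_inner_sub_inner_le_half hbasis2 (h23.trans h34) hα3pi hα3perp hαpi hαS3
  have hα3_near := abs_inner_sub_inner_le_half hbasis1 (h12.trans h23) hα2pi hα2perp hα3pi hα3S2
  have hc : ⟪α2, toE (n + 1) (z 1)⟫_ℝ ≠ 0 :=
    abs_ne_zero.mp (left_ne_zero_of_mul_eq_one (abs_inner_mul_detL_eq_one hbasis1 hα2pi hα2perp))
  have h1 := mul_pos_of_abs_sub_le_half (left_ne_zero_of_mul hsign.ne') hα_near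
  have h2 := mul_pos_of_abs_sub_le_half hc hα3_near
  nlinarith
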